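/- Let S₁,…,S_d be pairwise commuting Hermitian N×N complex matrices such that every eigenvalue of S_k lies in [μ_k, ν_k] for each k = 1,…,d, let h be a real multivariate polynomial with h(t) ≠ 0 for every t in the cube [μ,ν] = [μ₁,ν₁]×⋯×[μ_d,ν_d], let C_M be the Chebyshev interpolation polynomial of degree at most M in each variable interpolating 1/h at the tensor grid of rescaled Chebyshev points of [μ,ν], and set H = h(S₁,…,S_d), C = C_M(S₁,…,S_d) and b̃_M = sup_{t∈[μ,ν]} |1 − h(t)C_M(t)|. If b̃_M < 1, then H is invertible and for every vector y ∈ ℂ^N, every initial vector x⁽⁰⁾ ∈ ℂ^N, and every r with ρ(I − C·H) < r < 1 (where ρ denotes spectral radius), there exists a constant C' > 0 such that the iterates defined by x⁽ᵐ⁾ = x⁽ᵐ⁻¹⁾ − C·(H x⁽ᵐ⁻¹⁾ − y) satisfy ‖x⁽ᵐ⁾ − H⁻¹y‖₂ ≤ C' r^m ‖x⁽⁰⁾ − H⁻¹y‖₂ for all m ≥ 0. In particular x⁽ᵐ⁾ converges exponentially to H⁻¹y. -/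

import Mathlib

/-!
The `S k` are commuting Hermitian matrices, so `ℂ^N` is spanned by their joint eigenvectors, and
on a joint eigenvector with eigenvalues `t ∈ [μ, ν]` the Hermitian matrix `A = 1 - C * H` acts as
the scalar `1 - h(t) C_M(t)`. Every eigenvalue of `A` is therefore of this form, so it has modulus
at most `b̃_M < 1`; in particular `1 ∉ σ(A)`, so `C * H`, and with it `H`, is invertible. The
error of the iteration is `x⁽ᵐ⁾ - H⁻¹y = A^m (x⁽⁰⁾ - H⁻¹y)`, and since `A` is Hermitian its
operator norm is `ρ(A) < r`, so the bound holds with `C' = 1`.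
-/

open Matrix

/-- Rescaled Chebyshev point of order `M` in `[μ, ν]`. -/
noncomputable def chebPt (M : ℕ) (μ ν : ℝ) (j : ℕ) : ℝ :=
  (ν + μ) / 2 + (ν - μ) / 2 * Real.cos (((j : ℝ) + 1 / 2) * Real.pi / ((M : ℝ) + 1))

/-- Multivariate Lagrange basis polynomial at the tensor grid of rescaled Chebyshev points. -/
noncomputable def lagrangeBasisMv (d M : ℕ) (μ ν : Fin d → ℝ) (j : Fin d → Fin (M + 1)) :
    MvPolynomial (Fin d) ℝ :=
  ∏ k : Fin d, ∏ i ∈ Finset.univ.erase (j k),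
    MvPolynomial.C (chebPt M (μ k) (ν k) (j k : ℕ) - chebPt M (μ k) (ν k) (i : ℕ))⁻¹ *
      (MvPolynomial.X k - MvPolynomial.C (chebPt M (μ k) (ν k) (i : ℕ)))

/-- Chebyshev interpolation polynomial of `1/h` on the cube `[μ, ν]` of order `M`. -/
noncomputable def chebInterp (d M : ℕ) (μ ν : Fin d → ℝ) (h : MvPolynomial (Fin d) ℝ) :
    MvPolynomial (Fin d) ℝ :=
  ∑ j : Fin d → Fin (M + 1),
    MvPolynomial.C (MvPolynomial.eval (fun k => chebPt M (μ k) (ν k) (j k : ℕ)) h)⁻¹ *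
      lagrangeBasisMv d M μ ν j
/-- Evaluation of a real multivariate polynomial at a `d`-tuple of `N × N` complex matrices:
`p(S₁, …, S_d) = Σ p_{l₁,…,l_d} S₁^{l₁} ⋯ S_d^{l_d}`. -/
noncomputable def mvEvalMat {d N : ℕ} (p : MvPolynomial (Fin d) ℝ)
    (S : Fin d → Matrix (Fin N) (Fin N) ℂ) : Matrix (Fin N) (Fin N) ℂ :=
  ∑ m ∈ p.support, (Complex.ofReal (p.coeff m)) • (List.ofFn fun k => S k ^ m k).prod
/-- Spectral radius of a square complex matrix: the maximum modulus of its eigenvalues. -/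
noncomputable def specRad {N : ℕ} (A : Matrix (Fin N) (Fin N) ℂ) : ℝ :=
  sSup ((fun z : ℂ => ‖z‖) '' spectrum ℂ A)
/-- Euclidean norm on `ℂ^N`. -/
noncomputable def enorm2 {N : ℕ} (x : Fin N → ℂ) : ℝ :=
  Real.sqrt (∑ i, ‖x i‖ ^ 2)
/-- The maximal approximation error `b̃_M = sup_{t ∈ [μ,ν]} |1 - h(t) C_M(t)|`. -/
noncomputable def bTilde (d M : ℕ) (μ ν : Fin d → ℝ) (h : MvPolynomial (Fin d) ℝ) : ℝ :=
  sSup ((fun t => |1 - MvPolynomial.eval t h * MvPolynomial.eval t (chebInterp d M μ ν h)|) ''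
    Set.Icc μ ν)

open Module.End in
theorem LinearMap.IsSymmetric.exists_ne_bot_eq_of_hasEigenvalue {𝕜 E ι : Type*} [RCLike 𝕜]
    [NormedAddCommGroup E] [InnerProductSpace 𝕜 E] {T : E →ₗ[𝕜] E} (hT : T.IsSymmetric)
    {W : ι → Submodule 𝕜 E} (hW : ⨆ i, W i = ⊤) {c : ι → 𝕜}
    (hc : ∀ i, ∀ u ∈ W i, T u = c i • u) {β : 𝕜} (hβ : HasEigenvalue T β) :
    ∃ i, W i ≠ ⊥ ∧ c i = β := by
  by_contra! hne
  obtain ⟨v, hv, hv0⟩ := hβ.exists_hasEigenvector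
  have hW_orth : ∀ i, W i ≤ (𝕜 ∙ v)ᗮ := by
    intro i u hu
    rw [Submodule.mem_orthogonal_singleton_iff_inner_right]
    by_cases hci : c i = β
    · rw [(Submodule.eq_bot_iff _).1 (not_imp_not.1 (hne i) hci) u hu, inner_zero_right]
    · have key : c i * inner 𝕜 v u = β * inner 𝕜 v u := by
        calc c i * inner 𝕜 v u = inner 𝕜 v (T u) := by rw [hc i u hu, inner_smul_right]
          _ = inner 𝕜 (T v) u := (hT v u).symm
          _ = β * inner 𝕜 v u := by
            rw [mem_eigenspace_iff.1 hv, inner_smul_left, hT.conj_eigenvalue_eq_self hβ]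
      exact (mul_eq_mul_right_iff.1 key).resolve_left hci
  have hv_orth : v ∈ (𝕜 ∙ v)ᗮ := iSup_le hW_orth (hW ▸ Submodule.mem_top)
  exact hv0 (inner_self_eq_zero.1 (Submodule.mem_orthogonal_singleton_iff_inner_right.1 hv_orth))

open Module.End in
theorem Matrix.mem_spectrum_of_mulVec_eq_smul {R n : Type*} [Field R] [Fintype n] [DecidableEq n]
    {A : Matrix n n R} {u : n → R} {β : R} (hu : u ≠ 0) (hAu : A *ᵥ u = β • u) :
    β ∈ spectrum R A := by
  rw [← spectrum_toLin', ← hasEigenvalue_iff_mem_spectrum]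
  exact hasEigenvalue_of_hasEigenvector ⟨mem_eigenspace_iff.2 hAu, hu⟩

open Module.End WithLp in
theorem Matrix.IsHermitian.exists_joint_eigenvector_of_mem_spectrum {𝕜 n ι : Type*} [RCLike 𝕜]
    [Fintype n] [DecidableEq n] {S : ι → Matrix n n 𝕜} (hS : ∀ k, (S k).IsHermitian)
    (hcomm : ∀ k k', Commute (S k) (S k')) {A : Matrix n n 𝕜} (hA : A.IsHermitian)
    (c : (ι → 𝕜) → 𝕜) (hc : ∀ χ u, (∀ k, S k *ᵥ u = χ k • u) → A *ᵥ u = c χ • u)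
    {β : 𝕜} (hβ : β ∈ spectrum 𝕜 A) :
    ∃ χ u, u ≠ 0 ∧ (∀ k, S k *ᵥ u = χ k • u) ∧ c χ = β := by
  have hjoint : ∀ χ : ι → 𝕜, ∀ u ∈ ⨅ k, eigenspace (toEuclideanLin (S k)) (χ k),
      ∀ k, S k *ᵥ ofLp u = χ k • ofLp u := fun χ u hu k =>
    congrArg ofLp (mem_eigenspace_iff.1 ((Submodule.mem_iInf _).1 hu k))
  have htop := LinearMap.IsSymmetric.iSup_iInf_eq_top_of_commute
    (fun k => isSymmetric_toEuclideanLin_iff.2 (hS k))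
    (fun k k' _ => (hcomm k k').map (toLpLinAlgEquiv 2))
  obtain ⟨χ, hne, rfl⟩ := (isSymmetric_toEuclideanLin_iff.2 hA).exists_ne_bot_eq_of_hasEigenvalue
    htop (c := c) (fun χ u hu => congrArg (toLp 2) (hc χ _ (hjoint χ u hu)))
    (hasEigenvalue_iff_mem_spectrum.2 (by rwa [spectrum_toLpLin]))
  obtain ⟨u, hu, hu0⟩ := (Submodule.ne_bot_iff _).1 hne
  exact ⟨χ, ofLp u, by simpa using hu0, hjoint χ u hu, rfl⟩

theorem Matrix.pow_mulVec_of_mulVec_eq_smul {R n : Type*} [CommSemiring R] [Fintype n]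
    [DecidableEq n] {B : Matrix n n R} {c : R} {v : n → R} (hv : B *ᵥ v = c • v) (m : ℕ) :
    (B ^ m) *ᵥ v = c ^ m • v := by
  induction m with
  | zero => simp
  | succ m ih => rw [pow_succ', ← mulVec_mulVec, ih, mulVec_smul, hv, smul_smul, pow_succ]

theorem Matrix.list_prod_ofFn_mulVec_of_mulVec_eq_smul {R n : Type*} [CommSemiring R] [Fintype n]
    [DecidableEq n] {v : n → R} :
    ∀ {m : ℕ} (B : Fin m → Matrix n n R) (c : Fin m → R), (∀ k, B k *ᵥ v = c k • v) →
      (List.ofFn B).prod *ᵥ v = (∏ k, c k) • v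
  | 0, _, _, _ => by simp
  | m + 1, B, c, hB => by
    rw [List.ofFn_succ, List.prod_cons, ← mulVec_mulVec,
      list_prod_ofFn_mulVec_of_mulVec_eq_smul (fun k => B k.succ) (fun k => c k.succ)
        (fun k => hB k.succ), mulVec_smul, hB 0, Fin.prod_univ_succ, smul_smul, mul_comm]

theorem mvEvalMat_mulVec_of_mulVec_eq_smul {d N : ℕ} {S : Fin d → Matrix (Fin N) (Fin N) ℂ}
    (p : MvPolynomial (Fin d) ℝ) {χ : Fin d → ℂ} {v : Fin N → ℂ} (hv : ∀ k, S k *ᵥ v = χ k • v) :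
    mvEvalMat p S *ᵥ v = MvPolynomial.aeval χ p • v := by
  rw [mvEvalMat, sum_mulVec, MvPolynomial.aeval_def, MvPolynomial.eval₂_eq', Finset.sum_smul]
  refine Finset.sum_congr rfl fun m _ => ?_
  rw [smul_mulVec, list_prod_ofFn_mulVec_of_mulVec_eq_smul _ (fun k => χ k ^ m k)
    (fun k => pow_mulVec_of_mulVec_eq_smul (hv k) (m k)), smul_smul]
  rfl

theorem IsSelfAdjoint.list_prod {R : Type*} [Monoid R] [StarMul R] :
    ∀ {l : List R}, (∀ a ∈ l, IsSelfAdjoint a) → l.Pairwise Commute → IsSelfAdjoint l.prod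
  | [], _, _ => .one R
  | a :: l, hl, hc => by
    rw [List.pairwise_cons] at hc
    rw [List.prod_cons, ← (hl a List.mem_cons_self).commute_iff
      (list_prod (fun b hb => hl b (List.mem_cons_of_mem a hb)) hc.2)]
    exact .list_prod_right _ _ hc.1

theorem isHermitian_mvEvalMat {d N : ℕ} {S : Fin d → Matrix (Fin N) (Fin N) ℂ}
    (hS : ∀ k, (S k).IsHermitian) (hcomm : ∀ k k', Commute (S k) (S k'))
    (p : MvPolynomial (Fin d) ℝ) : (mvEvalMat p S).IsHermitian := by
  refine isSelfAdjoint_sum _ fun m _ => IsSelfAdjoint.smul (Complex.conj_ofReal _) ?_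
  refine IsSelfAdjoint.list_prod (fun a ha => ?_) (List.pairwise_ofFn.2 fun i j _ => ?_)
  · obtain ⟨k, rfl⟩ := List.mem_ofFn.1 ha
    exact (hS k).pow _
  · exact (hcomm i j).pow_pow _ _

theorem commute_mvEvalMat {d N : ℕ} {S : Fin d → Matrix (Fin N) (Fin N) ℂ}
    (hcomm : ∀ k k', Commute (S k) (S k')) (p q : MvPolynomial (Fin d) ℝ) :
    Commute (mvEvalMat p S) (mvEvalMat q S) := by
  refine .sum_left _ _ _ fun m _ => .sum_right _ _ _ fun m' _ => .smul_left (.smul_right ?_ _) _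
  refine .list_prod_right _ _ fun y hy => .list_prod_left _ _ fun z hz => ?_
  obtain ⟨k, rfl⟩ := List.mem_ofFn.1 hy
  obtain ⟨k', rfl⟩ := List.mem_ofFn.1 hz
  exact (hcomm k' k).pow_pow _ _

theorem isHermitian_one_sub_mvEvalMat_mul {d N : ℕ} {S : Fin d → Matrix (Fin N) (Fin N) ℂ}
    (hS : ∀ k, (S k).IsHermitian) (hcomm : ∀ k k', Commute (S k) (S k'))
    (p q : MvPolynomial (Fin d) ℝ) : (1 - mvEvalMat p S * mvEvalMat q S).IsHermitian :=
  isHermitian_one.sub <| ((isHermitian_mvEvalMat hS hcomm p).commute_iff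
    (isHermitian_mvEvalMat hS hcomm q)).1 (commute_mvEvalMat hcomm p q)

theorem spectrum_one_sub_mvEvalMat_mul_subset {d N : ℕ} {μ ν : Fin d → ℝ}
    {S : Fin d → Matrix (Fin N) (Fin N) ℂ} (hS : ∀ k, (S k).IsHermitian)
    (hcomm : ∀ k k', Commute (S k) (S k'))
    (hspec : ∀ k, spectrum ℂ (S k) ⊆ (fun x : ℝ => (x : ℂ)) '' Set.Icc (μ k) (ν k))
    (p q : MvPolynomial (Fin d) ℝ) :
    spectrum ℂ (1 - mvEvalMat p S * mvEvalMat q S) ⊆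
      (fun t => ((1 - MvPolynomial.eval t q * MvPolynomial.eval t p : ℝ) : ℂ)) '' Set.Icc μ ν := by
  intro β hβ
  obtain ⟨χ, u, hu0, hu, rfl⟩ :=
    (isHermitian_one_sub_mvEvalMat_mul hS hcomm p q).exists_joint_eigenvector_of_mem_spectrum
      hS hcomm (fun χ => 1 - MvPolynomial.aeval χ q * MvPolynomial.aeval χ p)
      (fun χ u hu => by
        rw [sub_mulVec, one_mulVec, ← mulVec_mulVec, mvEvalMat_mulVec_of_mulVec_eq_smul q hu,
          mulVec_smul, mvEvalMat_mulVec_of_mulVec_eq_smul p hu, smul_smul, sub_smul, one_smul])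
      hβ
  choose t ht hχ using fun k => hspec k (mem_spectrum_of_mulVec_eq_smul hu0 (hu k))
  obtain rfl : χ = algebraMap ℝ ℂ ∘ t := funext fun k => (hχ k).symm
  refine ⟨t, ⟨fun k => (ht k).1, fun k => (ht k).2⟩, ?_⟩
  simp only [MvPolynomial.aeval_algebraMap_apply]
  push_cast
  rfl

section SpectralRadius

variable {N : ℕ} {A : Matrix (Fin N) (Fin N) ℂ}

theorem specRad_nonneg : 0 ≤ specRad A :=
  Real.sSup_nonneg (by rintro _ ⟨β, -, rfl⟩; exact norm_nonneg β)

theorem norm_le_specRad {β : ℂ} (hβ : β ∈ spectrum ℂ A) : ‖β‖ ≤ specRad A :=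
  le_csSup (A.finite_spectrum.image _).bddAbove ⟨β, hβ, rfl⟩

theorem Matrix.IsHermitian.norm_toEuclideanCLM_le_specRad (hA : A.IsHermitian) :
    ‖toEuclideanCLM (𝕜 := ℂ) A‖ ≤ specRad A := by
  have hsa : IsSelfAdjoint (toEuclideanCLM (𝕜 := ℂ) A) := IsSelfAdjoint.map hA _
  have : spectralRadius ℂ (toEuclideanCLM (𝕜 := ℂ) A) ≤ ENNReal.ofReal (specRad A) := by
    refine iSup₂_le fun β hβ => ?_
    rw [AlgEquiv.spectrum_eq] at hβ
    rw [← enorm_eq_nnnorm, ← ofReal_norm]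
    exact ENNReal.ofReal_le_ofReal (norm_le_specRad hβ)
  rwa [hsa.spectralRadius_eq_nnnorm, ← enorm_eq_nnnorm, ← ofReal_norm,
    ENNReal.ofReal_le_ofReal_iff specRad_nonneg] at this

theorem enorm2_eq_norm_toLp (x : Fin N → ℂ) : enorm2 x = ‖WithLp.toLp 2 x‖ := by
  rw [EuclideanSpace.norm_eq, enorm2]

theorem Matrix.IsHermitian.enorm2_mulVec_le (hA : A.IsHermitian) (v : Fin N → ℂ) :
    enorm2 (A *ᵥ v) ≤ specRad A * enorm2 v := by
  rw [enorm2_eq_norm_toLp, enorm2_eq_norm_toLp]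
  calc ‖WithLp.toLp 2 (A *ᵥ v)‖ = ‖toEuclideanCLM (𝕜 := ℂ) A (WithLp.toLp 2 v)‖ := rfl
    _ ≤ ‖toEuclideanCLM (𝕜 := ℂ) A‖ * ‖WithLp.toLp 2 v‖ := ContinuousLinearMap.le_opNorm _ _
    _ ≤ specRad A * ‖WithLp.toLp 2 v‖ := by
      gcongr
      exact hA.norm_toEuclideanCLM_le_specRad

theorem Matrix.IsHermitian.enorm2_pow_mulVec_le (hA : A.IsHermitian) (m : ℕ) (v : Fin N → ℂ) :
    enorm2 ((A ^ m) *ᵥ v) ≤ specRad A ^ m * enorm2 v := by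
  induction m with
  | zero => simp
  | succ m ih =>
    rw [pow_succ', ← mulVec_mulVec, pow_succ', mul_assoc]
    exact (hA.enorm2_mulVec_le _).trans (mul_le_mul_of_nonneg_left ih specRad_nonneg)

end SpectralRadius

theorem Matrix.sub_eq_pow_mulVec_of_iterate {R n : Type*} [CommRing R] [Fintype n] [DecidableEq n]
    {H C : Matrix n n R} {y z : n → R} (hz : H *ᵥ z = y) {x : ℕ → n → R}
    (hx : ∀ m, x (m + 1) = x m - C *ᵥ (H *ᵥ x m - y)) (m : ℕ) :
    x m - z = ((1 - C * H) ^ m) *ᵥ (x 0 - z) := by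
  induction m with
  | zero => simp
  | succ m ih =>
    rw [pow_succ', ← mulVec_mulVec, ← ih, hx, ← hz, ← mulVec_sub, sub_mulVec, one_mulVec,
      ← mulVec_mulVec, mulVec_sub, mulVec_sub]
    abel

theorem abs_one_sub_mul_le_bTilde {d : ℕ} (M : ℕ) {μ ν t : Fin d → ℝ} (h : MvPolynomial (Fin d) ℝ)
    (ht : t ∈ Set.Icc μ ν) :
    |1 - MvPolynomial.eval t h * MvPolynomial.eval t (chebInterp d M μ ν h)| ≤
      bTilde d M μ ν h := by
  have hcont : Continuous fun t : Fin d → ℝ =>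
      |1 - MvPolynomial.eval t h * MvPolynomial.eval t (chebInterp d M μ ν h)| :=
    (continuous_const.sub ((MvPolynomial.continuous_eval h).mul
      (MvPolynomial.continuous_eval _))).abs
  exact le_csSup (isCompact_Icc.image hcont).bddAbove ⟨t, ht, rfl⟩

theorem cipa_exponential_convergence_general {d N M : ℕ} (μ ν : Fin d → ℝ)
    (S : Fin d → Matrix (Fin N) (Fin N) ℂ)
    (hcomm : ∀ k k', S k * S k' = S k' * S k)
    (hherm : ∀ k, (S k).IsHermitian)
    (hspec : ∀ k, spectrum ℂ (S k) ⊆ (fun x : ℝ => (x : ℂ)) '' Set.Icc (μ k) (ν k))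
    (h : MvPolynomial (Fin d) ℝ)
    (H C : Matrix (Fin N) (Fin N) ℂ)
    (hH : H = mvEvalMat h S)
    (hC : C = mvEvalMat (chebInterp d M μ ν h) S)
    (hb : bTilde d M μ ν h < 1) :
    IsUnit H ∧
      ∀ (y x0 : Fin N → ℂ) (x : ℕ → Fin N → ℂ),
        x 0 = x0 →
        (∀ m : ℕ, x (m + 1) = x m - C.mulVec (H.mulVec (x m) - y)) →
        ∀ r : ℝ, specRad (1 - C * H) < r → r < 1 →
          ∃ C' > (0 : ℝ), ∀ m : ℕ,
            enorm2 (x m - H⁻¹.mulVec y) ≤ C' * r ^ m * enorm2 (x0 - H⁻¹.mulVec y) := by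
  subst hH hC
  have hA := isHermitian_one_sub_mvEvalMat_mul hherm hcomm (chebInterp d M μ ν h) h
  have h1 : (1 : ℂ) ∉ spectrum ℂ (1 - mvEvalMat (chebInterp d M μ ν h) S * mvEvalMat h S) := by
    intro h1
    obtain ⟨t, ht, he⟩ := spectrum_one_sub_mvEvalMat_mul_subset hherm hcomm hspec _ h h1
    have hbt := abs_one_sub_mul_le_bTilde M h ht
    rw [Complex.ofReal_eq_one.1 he, abs_one] at hbt
    linarith
  have hHunit : IsUnit (mvEvalMat h S) :=
    isUnit_of_mul_isUnit_right (by simpa using spectrum.notMem_iff.1 h1)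
  refine ⟨hHunit, fun y x0 x hx0 hx r hr _ => ⟨1, one_pos, fun m => ?_⟩⟩
  have hz : mvEvalMat h S *ᵥ ((mvEvalMat h S)⁻¹ *ᵥ y) = y := by
    rw [mulVec_mulVec, mul_nonsing_inv _ ((isUnit_iff_isUnit_det _).1 hHunit), one_mulVec]
  rw [sub_eq_pow_mulVec_of_iterate hz hx m, hx0, one_mul]
  exact (hA.enorm2_pow_mulVec_le m _).trans
    (mul_le_mul_of_nonneg_right (pow_le_pow_left₀ specRad_nonneg hr.le m) (Real.sqrt_nonneg _))

/-- Theorem (exponential convergence of the Chebyshev interpolation polynomial approximation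
algorithm, CIPA): if `b̃_M < 1` then `H = h(S₁,…,S_d)` is invertible and the quasi-Newton
iterates `x⁽ᵐ⁾ = x⁽ᵐ⁻¹⁾ − C_M(S₁,…,S_d)·(H x⁽ᵐ⁻¹⁾ − y)` converge exponentially to `H⁻¹y`. -/
theorem cipa_exponential_convergence {d N M : ℕ} (μ ν : Fin d → ℝ) (hμν : ∀ k, μ k < ν k)
    (S : Fin d → Matrix (Fin N) (Fin N) ℂ)
    (hcomm : ∀ k k', S k * S k' = S k' * S k)
    (hherm : ∀ k, (S k).IsHermitian)
    (hspec : ∀ k, spectrum ℂ (S k) ⊆ (fun x : ℝ => (x : ℂ)) '' Set.Icc (μ k) (ν k))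
    (h : MvPolynomial (Fin d) ℝ)
    (hh : ∀ t ∈ Set.Icc μ ν, MvPolynomial.eval t h ≠ 0)
    (H C : Matrix (Fin N) (Fin N) ℂ)
    (hH : H = mvEvalMat h S)
    (hC : C = mvEvalMat (chebInterp d M μ ν h) S)
    (hb : bTilde d M μ ν h < 1) :
    IsUnit H ∧
      ∀ (y x0 : Fin N → ℂ) (x : ℕ → Fin N → ℂ),
        x 0 = x0 →
        (∀ m : ℕ, x (m + 1) = x m - C.mulVec (H.mulVec (x m) - y)) →
        ∀ r : ℝ, specRad (1 - C * H) < r → r < 1 →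
          ∃ C' > (0 : ℝ), ∀ m : ℕ,
            enorm2 (x m - H⁻¹.mulVec y) ≤ C' * r ^ m * enorm2 (x0 - H⁻¹.mulVec y) :=
  cipa_exponential_convergence_general μ ν S hcomm hherm hspec h H C hH hC hb
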